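/- arXiv:math/0108022 — 2 statements merged into one kernel-verified Lean document; each statement's English description precedes it below -/
import Mathlib

section
/- Let L be a Banach space with norm ‖·‖ and T : L → L a map satisfying ‖T(0)‖ ≤ F₀·s and ‖T(v) − T(w)‖ ≤ ‖v − w‖·(F₁·s + F₂(‖v‖ + ‖w‖) + F₃(‖v‖^{4/(n−2)} + ‖w‖^{4/(n−2)})) for all v, w ∈ L, where F₀, F₁, F₂, F₃, s > 0 and n ≥ 3. Then there exists W > 0 depending only on F₀, F₁, F₂, F₃ and n such that if s is sufficiently small, the sequence φᵢ = Tⁱ(0) converges in L to a limit φ with ‖φ‖ ≤ W·s. -/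
open Filter

/-- Lemma 3.3 (sequence convergence in a Banach space): if `T : L → L` satisfies
`‖T 0‖ ≤ F₀ s` and the quadratic/critical-exponent contraction estimate, then there is
`W > 0` depending only on `F₀,F₁,F₂,F₃,n` such that for `s` sufficiently small
the sequence `φᵢ = T^[i] 0` converges to a limit `φ` with `‖φ‖ ≤ W s`. -/
theorem stmt_0 (n : ℕ) (hn : 3 ≤ n) (F₀ F₁ F₂ F₃ : ℝ)
    (hF₀ : 0 < F₀) (hF₁ : 0 < F₁) (hF₂ : 0 < F₂) (hF₃ : 0 < F₃) :
    ∃ W > (0:ℝ), ∃ s₀ > (0:ℝ), ∀ s : ℝ, 0 < s → s ≤ s₀ →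
      ∀ (L : Type) [instL : NormedAddCommGroup L] [instS : NormedSpace ℝ L]
        [instC : CompleteSpace L] (T : L → L),
        ‖T 0‖ ≤ F₀ * s →
        (∀ v w : L, ‖T v - T w‖ ≤ ‖v - w‖ *
          (F₁ * s + F₂ * (‖v‖ + ‖w‖) +
            F₃ * (‖v‖ ^ ((4:ℝ) / ((n:ℝ) - 2)) + ‖w‖ ^ ((4:ℝ) / ((n:ℝ) - 2))))) →
        ∃ φ : L, Tendsto (fun i => T^[i] 0) atTop (nhds φ) ∧ ‖φ‖ ≤ W * s := by
  have hn2 : (2:ℝ) < (n:ℝ) := by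
    have : (3:ℝ) ≤ (n:ℝ) := by exact_mod_cast hn
    linarith
  set p : ℝ := (4:ℝ) / ((n:ℝ) - 2) with hp_def
  have hp : 0 < p := div_pos (by norm_num) (by linarith)
  set a₃ : ℝ := (1/(12*F₃))^(1/p)/(2*F₀) with ha₃_def
  have ha₃ : 0 < a₃ := by positivity
  refine ⟨2*F₀, by positivity, min (min (1/(6*F₁)) (1/(24*F₂*F₀))) a₃,
    lt_min (lt_min (by positivity) (by positivity)) ha₃, ?_⟩
  intro s hs hss L _ _ _ T hT0 hTlip
  have hsa1 : s ≤ 1/(6*F₁) := hss.trans ((min_le_left _ _).trans (min_le_left _ _))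
  have hsa2 : s ≤ 1/(24*F₂*F₀) := hss.trans ((min_le_left _ _).trans (min_le_right _ _))
  have hsa3 : s ≤ a₃ := hss.trans (min_le_right _ _)
  -- bound on contraction factor
  have hbound : ∀ v w : L, ‖v‖ ≤ 2*F₀*s → ‖w‖ ≤ 2*F₀*s →
      F₁ * s + F₂ * (‖v‖ + ‖w‖) + F₃ * (‖v‖ ^ p + ‖w‖ ^ p) ≤ 1/2 := by
    intro v w hv hw
    have h1 : F₁ * s ≤ 1/6 := by
      have h := mul_le_mul_of_nonneg_left hsa1 hF₁.le
      have heq : F₁ * (1/(6*F₁)) = 1/6 := by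
        field_simp
      linarith
    have h2 : F₂ * (‖v‖ + ‖w‖) ≤ 1/6 := by
      have : F₂ * (‖v‖ + ‖w‖) ≤ F₂ * (4*F₀*s) := by nlinarith
      have h2' : F₂ * (4*F₀*s) ≤ 1/6 := by
        have := mul_le_mul_of_nonneg_left hsa2 (by positivity : (0:ℝ) ≤ 4*F₂*F₀)
        calc F₂ * (4*F₀*s) = 4*F₂*F₀*s := by ring
          _ ≤ 4*F₂*F₀*(1/(24*F₂*F₀)) := this
          _ = 1/6 := by field_simp; ring
      linarith
    have hkey : (2*F₀*s) ^ p ≤ 1/(12*F₃) := by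
      have hmono : (2*F₀*s) ^ p ≤ (2*F₀*a₃) ^ p :=
        Real.rpow_le_rpow (by positivity) (by nlinarith) hp.le
      have heq : 2*F₀*a₃ = (1/(12*F₃))^(1/p) := by
        rw [ha₃_def]; field_simp
      have : (2*F₀*a₃) ^ p = 1/(12*F₃) := by
        rw [heq, one_div p, Real.rpow_inv_rpow (by positivity) hp.ne']
      linarith
    have hvp : ‖v‖ ^ p ≤ 1/(12*F₃) :=
      (Real.rpow_le_rpow (norm_nonneg v) hv hp.le).trans hkey
    have hwp : ‖w‖ ^ p ≤ 1/(12*F₃) :=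
      (Real.rpow_le_rpow (norm_nonneg w) hw hp.le).trans hkey
    have h3 : F₃ * (‖v‖ ^ p + ‖w‖ ^ p) ≤ 1/6 := by
      have : F₃ * (‖v‖ ^ p + ‖w‖ ^ p) ≤ F₃ * (2 * (1/(12*F₃))) := by nlinarith
      have h3' : F₃ * (2 * (1/(12*F₃))) = 1/6 := by field_simp; ring
      linarith
    linarith
  -- inductive bounds
  have key : ∀ i : ℕ, ‖T^[i] 0‖ ≤ 2*F₀*s * (1 - (1/2:ℝ)^i) ∧
      ‖T^[i+1] 0 - T^[i] 0‖ ≤ F₀*s * (1/2:ℝ)^i := by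
    intro i
    induction i with
    | zero => simpa using hT0
    | succ i ih =>
      obtain ⟨ihn, ihd⟩ := ih
      have hpow : (0:ℝ) ≤ (1/2:ℝ)^i := by positivity
      have hiter : T^[i+1] 0 = T (T^[i] 0) := Function.iterate_succ_apply' T i 0
      have hiter2 : T^[i+2] 0 = T (T^[i+1] 0) := Function.iterate_succ_apply' T (i+1) 0
      have hn1 : ‖T^[i+1] 0‖ ≤ 2*F₀*s * (1 - (1/2:ℝ)^(i+1)) := by
        have h := norm_sub_norm_le (T^[i+1] 0) (T^[i] 0)
        have heq : 2*F₀*s * (1 - (1/2:ℝ)^i) + F₀*s * (1/2:ℝ)^i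
            = 2*F₀*s * (1 - (1/2:ℝ)^(i+1)) := by rw [pow_succ]; ring
        linarith
      refine ⟨hn1, ?_⟩
      have hball : ∀ j : ℕ, ‖T^[j] 0‖ ≤ 2*F₀*s * (1 - (1/2:ℝ)^j) → ‖T^[j] 0‖ ≤ 2*F₀*s := by
        intro j hj
        have h1 : 2*F₀*s * (1 - (1/2:ℝ)^j) ≤ 2*F₀*s * 1 :=
          mul_le_mul_of_nonneg_left (by have := pow_nonneg (by norm_num : (0:ℝ) ≤ 1/2) j; linarith) (by positivity)
        linarith
      have hball1 : ‖T^[i+1] 0‖ ≤ 2*F₀*s := hball _ hn1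
      have hball0 : ‖T^[i] 0‖ ≤ 2*F₀*s := hball _ ihn
      have hlip := hTlip (T^[i+1] 0) (T^[i] 0)
      have hb := hbound _ _ hball1 hball0
      have hnn : (0:ℝ) ≤ ‖T^[i+1] 0 - T^[i] 0‖ := norm_nonneg _
      calc ‖T^[i+2] 0 - T^[i+1] 0‖ = ‖T (T^[i+1] 0) - T (T^[i] 0)‖ := by rw [hiter2, hiter]
        _ ≤ ‖T^[i+1] 0 - T^[i] 0‖ * (F₁ * s + F₂ * (‖T^[i+1] 0‖ + ‖T^[i] 0‖) +
              F₃ * (‖T^[i+1] 0‖ ^ p + ‖T^[i] 0‖ ^ p)) := hlip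
        _ ≤ ‖T^[i+1] 0 - T^[i] 0‖ * (1/2) := mul_le_mul_of_nonneg_left hb hnn
        _ ≤ (F₀*s * (1/2:ℝ)^i) * (1/2) := mul_le_mul_of_nonneg_right ihd (by norm_num)
        _ = F₀*s * (1/2:ℝ)^(i+1) := by rw [pow_succ]; ring
  -- Cauchy and limit
  have hdist : ∀ i : ℕ, dist (T^[i] 0) (T^[i+1] 0) ≤ (F₀*s) * (1/2:ℝ)^i := by
    intro i
    rw [dist_eq_norm, norm_sub_rev]
    exact (key i).2
  have hcauchy : CauchySeq (fun i => T^[i] 0) :=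
    cauchySeq_of_le_geometric (1/2) (F₀*s) (by norm_num) hdist
  obtain ⟨φ, hφ⟩ := cauchySeq_tendsto_of_complete hcauchy
  refine ⟨φ, hφ, ?_⟩
  have hfin := dist_le_of_le_geometric_of_tendsto₀ (1/2) (F₀*s) (by norm_num) hdist hφ
  have : dist ((fun i => T^[i] 0) 0) φ = ‖φ‖ := by simp [dist_eq_norm, norm_sub_rev]
  rw [this] at hfin
  calc ‖φ‖ ≤ F₀*s / (1 - 1/2) := hfin
    _ = 2*F₀*s := by ring
    _ = 2*F₀*s := rfl
end

section
/- Let n ≥ 3 and define f : ℝ → ℝ by f(x) = |1+x|^{(n+2)/(n−2)} − 1 − ((n+2)/(n−2))·x. Then there exist constants F₄, F₅ ≥ 0 depending only on n, with F₄ = 0 when n ≥ 6, such that |f(x) − f(y)| ≤ |x − y|·(F₄(|x| + |y|) + F₅(|x|^{4/(n−2)} + |y|^{4/(n−2)})) for all x, y ∈ ℝ. -/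
/-!
With `q = 4/(n-2)` the exponent is `q + 1`, and the derivative of
`g(x) = |1+x|^(q+1) - 1 - (q+1) x` is `(q+1) (φ(1+t) - 1)`, where `φ(s) = |s|^(q-1) s` is the odd
extension of `s ↦ s^q`. By the mean value theorem it therefore suffices to bound `|φ(s) - 1|` by
`A |s-1| + B |s-1|^q`. For `q ≤ 1` (i.e. `n ≥ 6`) the power `s ↦ s^q` is `q`-Hölder and `A = 0`
works; for `q ≥ 1` it is only locally Lipschitz, with constant `q max(s,1)^(q-1)`, and splitting
`(1 + |s-1|)^(q-1) ≤ 2^(q-1) (1 + |s-1|^(q-1))` produces the linear term.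
-/

open Real Set

-- Written as `|s| ^ (q - 1) * s`, the form in which `hasDerivAt_abs_rpow` states derivatives.
noncomputable def signedRpow (q s : ℝ) : ℝ := |s| ^ (q - 1) * s

lemma signedRpow_of_nonneg {q s : ℝ} (hq : 0 < q) (hs : 0 ≤ s) : signedRpow q s = s ^ q := by
  rw [signedRpow, abs_of_nonneg hs, ← rpow_add_one' hs (by linarith), sub_add_cancel]

lemma signedRpow_of_nonpos {q s : ℝ} (hq : 0 < q) (hs : s ≤ 0) :
    signedRpow q s = -(-s) ^ q := by
  rw [signedRpow, abs_of_nonpos hs, ← sub_add_cancel q 1, rpow_add_one' (neg_nonneg.2 hs)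
    (by linarith), add_sub_cancel_right]
  ring

lemma rpow_max_le_add_rpow {a b : ℝ} (ha : 0 ≤ a) (hb : 0 ≤ b) (r : ℝ) :
    max a b ^ r ≤ a ^ r + b ^ r := by
  rcases max_cases a b with ⟨h, -⟩ | ⟨h, -⟩ <;> rw [h]
  · linarith [rpow_nonneg hb r]
  · linarith [rpow_nonneg ha r]

lemma one_add_rpow_le_two_rpow_mul {h r : ℝ} (hh : 0 ≤ h) (hr : 0 ≤ r) :
    (1 + h) ^ r ≤ 2 ^ r * (1 + h ^ r) :=
  calc (1 + h) ^ r ≤ (2 * max 1 h) ^ r :=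
        rpow_le_rpow (by positivity) (by linarith [le_max_left 1 h, le_max_right 1 h]) hr
    _ = 2 ^ r * max 1 h ^ r := mul_rpow zero_le_two (by positivity)
    _ ≤ 2 ^ r * (1 + h ^ r) := by
        gcongr
        simpa using rpow_max_le_add_rpow zero_le_one hh r

lemma abs_rpow_sub_rpow_le_abs_sub_rpow {q a b : ℝ} (hq₀ : 0 ≤ q) (hq₁ : q ≤ 1) (ha : 0 ≤ a)
    (hb : 0 ≤ b) : |a ^ q - b ^ q| ≤ |a - b| ^ q := by
  wlog hba : b ≤ a generalizing a b
  · rw [abs_sub_comm, abs_sub_comm a]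
    exact this hb ha (le_of_not_ge hba)
  have hmono : b ^ q ≤ a ^ q := rpow_le_rpow hb hba hq₀
  have hsubadd : a ^ q ≤ (a - b) ^ q + b ^ q := by
    simpa using rpow_add_le_add_rpow (sub_nonneg.2 hba) hb hq₀ hq₁
  rw [abs_of_nonneg (sub_nonneg.2 hmono), abs_of_nonneg (sub_nonneg.2 hba)]
  linarith

lemma abs_rpow_sub_rpow_le_mul_abs_sub {q a b : ℝ} (hq : 1 ≤ q) (ha : 0 ≤ a) (hb : 0 ≤ b) :
    |a ^ q - b ^ q| ≤ q * max a b ^ (q - 1) * |a - b| := by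
  have hderiv : ∀ x ∈ uIcc b a,
      HasDerivWithinAt (fun x ↦ x ^ q) (q * x ^ (q - 1)) (uIcc b a) x :=
    fun x _ ↦ (hasDerivAt_rpow_const (Or.inr hq)).hasDerivWithinAt
  have hbound : ∀ x ∈ uIcc b a, ‖q * x ^ (q - 1)‖ ≤ q * max a b ^ (q - 1) := by
    intro x hx
    have hx₀ : 0 ≤ x := (le_min hb ha).trans hx.1
    rw [norm_of_nonneg (by positivity)]
    gcongr
    exact hx.2.trans_eq (max_comm b a)
  simpa only [Real.norm_eq_abs] using
    (convex_uIcc b a).norm_image_sub_le_of_norm_hasDerivWithin_le hderiv hbound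
      left_mem_uIcc right_mem_uIcc

lemma abs_signedRpow_sub_one_le_of_nonpos {q s : ℝ} (hq : 0 < q) (hs : s ≤ 0) :
    |signedRpow q s - 1| ≤ 1 + |s - 1| ^ q := by
  have hpow : (-s) ^ q ≤ (1 - s) ^ q := rpow_le_rpow (neg_nonneg.2 hs) (by linarith) hq.le
  rw [signedRpow_of_nonpos hq hs, abs_of_nonpos (by linarith [rpow_nonneg (neg_nonneg.2 hs) q]),
    abs_of_nonpos (by linarith), neg_sub s 1]
  linarith

lemma abs_signedRpow_sub_one_le_of_le_one {q : ℝ} (hq₀ : 0 < q) (hq₁ : q ≤ 1) (s : ℝ) :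
    |signedRpow q s - 1| ≤ 2 * |s - 1| ^ q := by
  rcases le_total s 0 with hs | hs
  · have : 1 ≤ |s - 1| ^ q :=
      one_le_rpow (by rw [abs_of_nonpos (by linarith)]; linarith) hq₀.le
    linarith [abs_signedRpow_sub_one_le_of_nonpos hq₀ hs]
  · have := abs_rpow_sub_rpow_le_abs_sub_rpow hq₀.le hq₁ hs zero_le_one
    rw [one_rpow] at this
    rw [signedRpow_of_nonneg hq₀ hs]
    linarith [rpow_nonneg (abs_nonneg (s - 1)) q]

lemma abs_signedRpow_sub_one_le_of_one_le {q : ℝ} (hq : 1 ≤ q) (s : ℝ) :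
    |signedRpow q s - 1| ≤ q * 2 ^ (q - 1) * (|s - 1| + |s - 1| ^ q) := by
  set h := |s - 1| with h_def
  have hh : 0 ≤ h := abs_nonneg _
  have hK : 1 ≤ q * 2 ^ (q - 1) :=
    one_le_mul_of_one_le_of_one_le hq (one_le_rpow one_le_two (by linarith))
  rcases le_total s 0 with hs | hs
  · have h₁ : 1 ≤ h := by rw [h_def, abs_of_nonpos (by linarith)]; linarith
    calc |signedRpow q s - 1| ≤ 1 + h ^ q := abs_signedRpow_sub_one_le_of_nonpos (by linarith) hs
      _ ≤ h + h ^ q := by linarith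
      _ ≤ q * 2 ^ (q - 1) * (h + h ^ q) := le_mul_of_one_le_left (by positivity) hK
  · have hmax : max s 1 ≤ 1 + h := max_le (by linarith [le_abs_self (s - 1)]) (by linarith)
    calc |signedRpow q s - 1| = |s ^ q - 1 ^ q| := by
          rw [signedRpow_of_nonneg (by linarith) hs, one_rpow]
      _ ≤ q * max s 1 ^ (q - 1) * h := abs_rpow_sub_rpow_le_mul_abs_sub hq hs zero_le_one
      _ ≤ q * (2 ^ (q - 1) * (1 + h ^ (q - 1))) * h := by
          gcongr
          exact (rpow_le_rpow (by positivity) hmax (by linarith)).trans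
            (one_add_rpow_le_two_rpow_mul hh (by linarith))
      _ = q * 2 ^ (q - 1) * (h + h ^ (q - 1) * h) := by ring
      _ = q * 2 ^ (q - 1) * (h + h ^ q) := by
          rw [← rpow_add_one' hh (by linarith), sub_add_cancel]

lemma abs_sub_le_of_hasDerivAt_of_abs_deriv_le {f f' : ℝ → ℝ} {C₁ C₂ q : ℝ} (hC₁ : 0 ≤ C₁)
    (hC₂ : 0 ≤ C₂) (hq : 0 ≤ q) (hf : ∀ t, HasDerivAt f (f' t) t)
    (hf' : ∀ t, |f' t| ≤ C₁ * |t| + C₂ * |t| ^ q) (x y : ℝ) :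
    |f x - f y| ≤ |x - y| * (C₁ * (|x| + |y|) + C₂ * (|x| ^ q + |y| ^ q)) := by
  have hbound : ∀ t ∈ uIcc y x, ‖f' t‖ ≤ C₁ * (|x| + |y|) + C₂ * (|x| ^ q + |y| ^ q) := by
    intro t ht
    have hmax : |t| ≤ max |x| |y| := by
      rcases mem_uIcc.1 ht with ⟨hyt, htx⟩ | ⟨hxt, hty⟩
      · exact (abs_le_max_abs_abs hyt htx).trans_eq (max_comm _ _)
      · exact abs_le_max_abs_abs hxt hty
    calc ‖f' t‖ ≤ C₁ * |t| + C₂ * |t| ^ q := hf' t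
      _ ≤ C₁ * (|x| + |y|) + C₂ * max |x| |y| ^ q := by
          gcongr
          · exact hmax.trans (max_le_add_of_nonneg (abs_nonneg _) (abs_nonneg _))
      _ ≤ C₁ * (|x| + |y|) + C₂ * (|x| ^ q + |y| ^ q) := by
          gcongr
          exact rpow_max_le_add_rpow (abs_nonneg _) (abs_nonneg _) q
  have := (convex_uIcc y x).norm_image_sub_le_of_norm_hasDerivWithin_le
    (fun t _ ↦ (hf t).hasDerivWithinAt) hbound left_mem_uIcc right_mem_uIcc
  simpa only [Real.norm_eq_abs, mul_comm] using this

lemma hasDerivAt_abs_one_add_rpow_sub {q : ℝ} (hq : 0 < q) (t : ℝ) :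
    HasDerivAt (fun x ↦ |1 + x| ^ (q + 1) - 1 - (q + 1) * x)
      ((q + 1) * (signedRpow q (1 + t) - 1)) t := by
  have hpow := (hasDerivAt_abs_rpow (1 + t) (by linarith : 1 < q + 1)).comp_const_add 1 t
  have hlin : HasDerivAt (fun x ↦ (q + 1) * x) (q + 1) t := by
    simpa using (hasDerivAt_id t).const_mul (q + 1)
  refine ((hpow.sub_const 1).sub hlin).congr_deriv ?_
  rw [signedRpow, show q + 1 - 2 = q - 1 by ring]
  ring

lemma abs_abs_one_add_rpow_sub_sub_le {q A B : ℝ} (hq : 0 < q) (hA : 0 ≤ A) (hB : 0 ≤ B)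
    (hφ : ∀ s, |signedRpow q s - 1| ≤ A * |s - 1| + B * |s - 1| ^ q) (x y : ℝ) :
    |(|1 + x| ^ (q + 1) - 1 - (q + 1) * x) - (|1 + y| ^ (q + 1) - 1 - (q + 1) * y)|
      ≤ |x - y| * ((q + 1) * A * (|x| + |y|) + (q + 1) * B * (|x| ^ q + |y| ^ q)) := by
  refine abs_sub_le_of_hasDerivAt_of_abs_deriv_le (by positivity) (by positivity) hq.le
    (hasDerivAt_abs_one_add_rpow_sub hq) (fun t ↦ ?_) x y
  rw [abs_mul, abs_of_pos (by linarith), mul_assoc, mul_assoc, ← mul_add]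
  gcongr
  simpa using hφ (1 + t)

/-- Estimate (3.5): for `n ≥ 3` and
`f(x) = |1+x|^{(n+2)/(n-2)} − 1 − ((n+2)/(n-2)) x`, there are constants
`F₄, F₅ ≥ 0` depending only on `n`, with `F₄ = 0` when `n ≥ 6`, such that
`|f(x) − f(y)| ≤ |x−y| (F₄(|x|+|y|) + F₅(|x|^{4/(n-2)} + |y|^{4/(n-2)}))`
for all real `x, y`. -/
theorem stmt_19 (n : ℕ) (hn : 3 ≤ n) :
    ∃ F₄ F₅ : ℝ, 0 ≤ F₄ ∧ 0 ≤ F₅ ∧ (6 ≤ n → F₄ = 0) ∧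
      ∀ x y : ℝ,
        |(|1 + x| ^ (((n:ℝ) + 2) / ((n:ℝ) - 2)) - 1 - (((n:ℝ) + 2) / ((n:ℝ) - 2)) * x)
          - (|1 + y| ^ (((n:ℝ) + 2) / ((n:ℝ) - 2)) - 1 - (((n:ℝ) + 2) / ((n:ℝ) - 2)) * y)|
        ≤ |x - y| * (F₄ * (|x| + |y|)
            + F₅ * (|x| ^ ((4:ℝ) / ((n:ℝ) - 2)) + |y| ^ ((4:ℝ) / ((n:ℝ) - 2)))) := by
  have hn₂ : (0 : ℝ) < n - 2 := by
    have : (3 : ℝ) ≤ n := by exact_mod_cast hn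
    linarith
  set q : ℝ := 4 / ((n : ℝ) - 2) with hq_def
  have hq : 0 < q := by positivity
  have hp : ((n : ℝ) + 2) / ((n : ℝ) - 2) = q + 1 := by
    rw [hq_def]
    field_simp
    ring
  rw [hp]
  by_cases h6 : 6 ≤ n
  · have hq₁ : q ≤ 1 := by
      rw [hq_def, div_le_one hn₂]
      linarith [show (6 : ℝ) ≤ n by exact_mod_cast h6]
    refine ⟨0, (q + 1) * 2, le_rfl, by positivity, fun _ ↦ rfl, ?_⟩
    simpa using abs_abs_one_add_rpow_sub_sub_le hq le_rfl zero_le_two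
      (fun s ↦ by simpa using abs_signedRpow_sub_one_le_of_le_one hq hq₁ s)
  · have hq₁ : 1 ≤ q := by
      rw [hq_def, le_div_iff₀ hn₂]
      linarith [show (n : ℝ) ≤ 5 by exact_mod_cast (by omega : n ≤ 5)]
    refine ⟨(q + 1) * (q * 2 ^ (q - 1)), (q + 1) * (q * 2 ^ (q - 1)), by positivity,
      by positivity, fun h ↦ absurd h h6, ?_⟩
    exact abs_abs_one_add_rpow_sub_sub_le hq (by positivity) (by positivity)
      (fun s ↦ (abs_signedRpow_sub_one_le_of_one_le hq₁ s).trans_eq (mul_add _ _ _))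
end
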